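/- Let 𝒜 be an irreducible Coxeter arrangement with Coxeter group W and m: 𝒜 → ℤ any multiplicity. Define m*(H) := max_{w ∈ W} (2·⌊m(wH)/2⌋ + 1). Then D(𝒜, m)^W = D(𝒜, m*)^W. -/

import Mathlib

/-!
Common setup for formalizing "Primitive derivations, Shi arrangements,
and Bandlow-Musiker-Wagon identities" style results on equivariant
multiplicities of Coxeter arrangements (Abe–Terao).

We work with the polynomial ring `S = ℝ[x_1, …, x_n]` (the symmetric algebra
of `V*` in orthonormal coordinates), its fraction field `F`, and the module
`Der_F` of ℝ-linear derivations of `F`.  All structures of the paper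
(the Coxeter arrangement `𝒜`, the Coxeter group `W` with its actions,
basic invariants, the primitive derivation, the Levi-Civita connection `∇`,
the module `D(𝒜, −∞)` and the modules `D(𝒜, m)`) are packaged, with their
characterizing properties, in the structures `CoxSetup` / `CoxSetup2` below.
-/

open MvPolynomial

noncomputable section

set_option synthInstance.maxHeartbeats 1000000
set_option maxHeartbeats 1000000

/-- `S`: the symmetric algebra of `V*`, i.e. the polynomial ring in the
orthonormal coordinates `x_1, …, x_n` of the `n`-dimensional Euclidean space `V`. -/
abbrev SS (n : ℕ) : Type := MvPolynomial (Fin n) ℝ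

/-- `F`: the quotient field of `S`. -/
abbrev FF (n : ℕ) : Type := FractionRing (SS n)

/-- `Der_F`: the `F`-module of ℝ-linear derivations of `F`. -/
abbrev DerF (n : ℕ) : Type := Derivation ℝ (FF n) (FF n)

variable {n : ℕ}

/-- The canonical embedding `S → F`. -/
def toF (f : SS n) : FF n := algebraMap (SS n) (FF n) f

/-- The coordinate `x_i`, viewed in `F`. -/
def XF (i : Fin n) : FF n := toF (X i)

/-- `f ∈ α^m ⬝ S_{(α)}` inside `F`, where `S_{(α)}` is the localization of `S`
at the prime ideal `(α)` and `m ∈ ℤ`. -/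
def MemLoc (α : SS n) (m : ℤ) (f : FF n) : Prop :=
  ∃ s t : SS n, t ∉ Ideal.span ({α} : Set (SS n)) ∧
    f * toF t = (toF α) ^ m * toF s

/-- `f ∈ F` is homogeneous of degree `d ∈ ℤ` (a quotient of homogeneous
polynomials whose degrees differ by `d`). -/
def HomogF (f : FF n) (d : ℤ) : Prop :=
  ∃ (s t : SS n) (a b : ℕ), t ≠ 0 ∧ s.IsHomogeneous a ∧ t.IsHomogeneous b ∧
    (a : ℤ) - (b : ℤ) = d ∧ f * toF t = toF s

/-- A derivation `θ ≠ 0` is homogeneous of degree `d`: `θ(α)` is homogeneous of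
degree `d` whenever `θ(α) ≠ 0`, for `α ∈ V*` (degree-one forms). -/
def DerHomog (θ : DerF n) (d : ℤ) : Prop :=
  θ ≠ 0 ∧ ∀ p : SS n, p.IsHomogeneous 1 →
    θ (toF p) = 0 ∨ HomogF (θ (toF p)) d

/-- The inner product `I*` on linear forms, in the orthonormal coordinates. -/
def ip1 (p q : SS n) : ℝ :=
  ∑ i, p.coeff (Finsupp.single i 1) * q.coeff (Finsupp.single i 1)

/-- `θ` restricts to a derivation of `S` (an element of `Der_S`). -/
def IsPolyDer (θ : DerF n) : Prop := ∀ i : Fin n, ∃ s : SS n, θ (XF i) = toF s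

/-- Conjugation of a derivation by a field automorphism: `θ ↦ e ∘ θ ∘ e⁻¹`.
This is the natural action of automorphisms on `Der_F`. -/
def conjDer (e : FF n ≃ₐ[ℝ] FF n) (θ : DerF n) : DerF n where
  toLinearMap := e.toLinearMap ∘ₗ θ.toLinearMap ∘ₗ e.symm.toLinearMap
  map_one_eq_zero' := by
    simp [Derivation.map_one_eq_zero]
  leibniz' := by
    intro a b
    have h : e.symm (a * b) = e.symm a * e.symm b := map_mul _ _ _
    simp only [LinearMap.coe_comp, Function.comp_apply, AlgEquiv.toLinearMap_apply,
      Derivation.coeFn_coe, h, Derivation.leibniz, smul_eq_mul, map_add, map_mul,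
      AlgEquiv.apply_symm_apply]

/-- The index of the top-degree basic invariant. -/
def lastIdx (n : ℕ) (hn : 0 < n) : Fin n := ⟨n - 1, Nat.sub_lt hn Nat.one_pos⟩

/-- Integer iterates of a map `f` whose inverse (on the relevant set) is `g`. -/
def zpowIter {X : Type*} (f g : X → X) : ℤ → X → X
  | Int.ofNat k => f^[k]
  | Int.negSucc k => g^[k + 1]

/-- `Θ` is a basis of the set `M ⊆ Der_F` over the subring of `S` given by the
set of coefficients `Coef` (e.g. `Coef = Set.univ` for an `S`-basis, `Coef = R`
for an `R`-basis, `Coef = T` for a `T`-basis). -/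
def isBasisOver {ι : Type*} (Coef : Set (SS n)) (Θ : ι → DerF n)
    (M : Set (DerF n)) : Prop :=
  (∀ i, Θ i ∈ M) ∧
  (∀ c : ι →₀ SS n, (∀ i, c i ∈ Coef) →
    (c.sum fun i f => toF f • Θ i) = 0 → c = 0) ∧
  (∀ δ ∈ M, ∃ c : ι →₀ SS n, (∀ i, c i ∈ Coef) ∧
    δ = c.sum fun i f => toF f • Θ i)

/-- `θ_1, …, θ_n` is an `S`-basis of the set `M ⊆ Der_F`. -/
def IsSBasis {ι : Type*} [Fintype ι] (Θ : ι → DerF n) (M : Set (DerF n)) : Prop :=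
  (∀ i, Θ i ∈ M) ∧
  (∀ c : ι → SS n, (∑ i, toF (c i) • Θ i) = 0 → ∀ i, c i = 0) ∧
  (∀ δ ∈ M, ∃ c : ι → SS n, δ = ∑ i, toF (c i) • Θ i)

/-- An `n`-dimensional irreducible Coxeter arrangement `𝒜` (hyperplanes indexed
by `hyp`, with defining linear forms `α`), together with its Coxeter group `W`
(acting orthogonally on `V`, hence on `S`, on `F` and on hyperplanes), a set of
basic invariants `P_1, …, P_n` of degrees `d_1 ≤ … ≤ d_n = h`, the partial
derivatives `∂/∂x_i` and `∂/∂P_i` (so `D = ∂/∂P_n` is a primitive derivation),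
the Euler derivation `E`, the Levi-Civita connection `∇` of the flat metric `I`,
the module `D(𝒜, −∞)` of Abe–Terao, and the inverse of the `T`-linear
automorphism `∇_D` of `D(𝒜, −∞)^W`. -/
structure CoxSetup (n : ℕ) (hn : 0 < n) (hyp W : Type)
    [Fintype hyp] [Group W] [Fintype W] : Type where
  hypNe : Nonempty hyp
  /-- the defining linear forms of the hyperplanes -/
  α : hyp → SS n
  α_ne : ∀ H, α H ≠ 0
  α_hom : ∀ H, (α H).IsHomogeneous 1
  α_red : ∀ H H' : hyp, (∃ c : ℝ, c ≠ 0 ∧ α H = c • α H') → H = H'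
  /-- the action of `W` on `S` by graded `ℝ`-algebra automorphisms -/
  actS : W →* (SS n ≃ₐ[ℝ] SS n)
  actS_lin : ∀ (w : W) (p : SS n), p.IsHomogeneous 1 → (actS w p).IsHomogeneous 1
  /-- `W` acts orthogonally -/
  actS_orth : ∀ (w : W) (p q : SS n), p.IsHomogeneous 1 → q.IsHomogeneous 1 →
      ip1 (actS w p) (actS w q) = ip1 p q
  actS_faithful : ∀ w : W, (∀ f, actS w f = f) → w = 1
  /-- the action of `W` on the set of hyperplanes -/
  σ : W →* Equiv.Perm hyp
  σ_compat : ∀ (w : W) (H : hyp), ∃ c : ℝ, c ≠ 0 ∧ actS w (α H) = c • α (σ w H)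
  /-- the orthogonal reflection through each hyperplane of `𝒜` -/
  reflW : hyp → W
  reflW_α : ∀ H, actS (reflW H) (α H) = - α H
  reflW_fix : ∀ (H) (p : SS n), p.IsHomogeneous 1 → ip1 p (α H) = 0 →
      actS (reflW H) p = p
  /-- `W` is generated by the reflections -/
  W_gen : Subgroup.closure (Set.range reflW) = (⊤ : Subgroup W)
  /-- `𝒜` is the full reflection arrangement of `W` -/
  hyp_all : ∀ (w : W) (p : SS n), p.IsHomogeneous 1 → p ≠ 0 → actS w p = -p →
      (∀ q : SS n, q.IsHomogeneous 1 → ip1 p q = 0 → actS w q = q) →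
      ∃ (H : hyp) (c : ℝ), c ≠ 0 ∧ p = c • α H
  /-- irreducibility: `W` acts irreducibly on `V*` -/
  irred : ∀ U : Submodule ℝ (SS n), U ≤ Submodule.span ℝ (Set.range X) →
      (∀ (w : W), ∀ p ∈ U, actS w p ∈ U) →
      U = ⊥ ∨ U = Submodule.span ℝ (Set.range X)
  /-- the induced action of `W` on the quotient field `F` -/
  actF : W →* (FF n ≃ₐ[ℝ] FF n)
  actF_compat : ∀ (w : W) (f : SS n), actF w (toF f) = toF (actS w f)
  /-- basic invariants `P_1, …, P_n` of `W`, of degrees `d_1 ≤ … ≤ d_n = h` -/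
  P : Fin n → SS n
  d : Fin n → ℕ
  d_mono : Monotone d
  d_pos : ∀ i, 0 < d i
  P_hom : ∀ i, (P i).IsHomogeneous (d i)
  P_inv : ∀ (w : W) (i : Fin n), actS w (P i) = P i
  P_indep : AlgebraicIndependent ℝ P
  P_gen : ∀ f : SS n, (∀ w : W, actS w f = f) → f ∈ Algebra.adjoin ℝ (Set.range P)
  /-- the partial derivatives `∂/∂x_i`, as derivations of `F` -/
  dX : Fin n → DerF n
  dX_eq : ∀ i j, dX i (XF j) = if i = j then 1 else 0
  /-- the partial derivatives `∂/∂P_i`, as derivations of `F`;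
  `∂/∂P_n` is the primitive derivation `D` -/
  dP : Fin n → DerF n
  dP_eq : ∀ i j, dP i (toF (P j)) = if i = j then 1 else 0
  /-- the Euler derivation -/
  Eul : DerF n
  Eul_eq : ∀ i, Eul (XF i) = XF i
  /-- the Levi-Civita connection of the flat metric `I`, characterized in the
  orthonormal coordinates by `(∇_θ δ)(x_i) = θ(δ(x_i))` -/
  nabla : DerF n → DerF n → DerF n
  nabla_eq : ∀ (θ δ : DerF n) (i : Fin n), nabla θ δ (XF i) = θ (δ (XF i))
  /-- the module `D(𝒜, −∞) = I*(Ω¹(𝒜, ∞))` of Abe–Terao -/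
  Dinf : Set (DerF n)
  Dinf_zero : (0 : DerF n) ∈ Dinf
  Dinf_add : ∀ θ δ, θ ∈ Dinf → δ ∈ Dinf → θ + δ ∈ Dinf
  Dinf_smul : ∀ (f : SS n) (θ), θ ∈ Dinf → toF f • θ ∈ Dinf
  Dinf_poly : ∀ θ : DerF n, IsPolyDer θ → θ ∈ Dinf
  Dinf_stab : ∀ (w : W) (θ), θ ∈ Dinf → conjDer (actF w) θ ∈ Dinf
  /-- the inverse of the `T`-linear automorphism
  `∇_D : D(𝒜, −∞)^W → D(𝒜, −∞)^W` ([AT08, AT09]) -/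
  nablaDinv : DerF n → DerF n
  nablaDinv_spec : ∀ θ : DerF n, θ ∈ Dinf → (∀ w : W, conjDer (actF w) θ = θ) →
      nablaDinv θ ∈ Dinf ∧ (∀ w : W, conjDer (actF w) (nablaDinv θ) = nablaDinv θ) ∧
      nabla (dP (lastIdx n hn)) (nablaDinv θ) = θ ∧
      nablaDinv (nabla (dP (lastIdx n hn)) θ) = θ

variable {hn : 0 < n} {hyp W : Type} [Fintype hyp] [Group W] [Fintype W]

/-- The natural action of `w ∈ W` on `Der_F`. -/
def actDer (C : CoxSetup n hn hyp W) (w : W) (θ : DerF n) : DerF n :=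
  conjDer (C.actF w) θ

/-- `θ` is `W`-invariant. -/
def invDer (C : CoxSetup n hn hyp W) (θ : DerF n) : Prop :=
  ∀ w : W, actDer C w θ = θ

/-- The module `D(𝒜, m)` attached to a multiplicity `m : 𝒜 → ℤ`. -/
def Dmod (C : CoxSetup n hn hyp W) (m : hyp → ℤ) : Set (DerF n) :=
  {θ | θ ∈ C.Dinf ∧ ∀ H : hyp, MemLoc (C.α H) (m H) (θ (toF (C.α H)))}

/-- The `W`-invariant part `D(𝒜, m)^W`. -/
def DmodW (C : CoxSetup n hn hyp W) (m : hyp → ℤ) : Set (DerF n) :=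
  {θ | θ ∈ Dmod C m ∧ invDer C θ}

/-- The invariant ring `R = S^W`. -/
def Rinv (C : CoxSetup n hn hyp W) : Set (SS n) :=
  {f | ∀ w : W, C.actS w f = f}

/-- The primitive derivation `D = ∂/∂P_n`. -/
def Dprim (C : CoxSetup n hn hyp W) : DerF n := C.dP (lastIdx n hn)

/-- `T = {f ∈ R | D f = 0} = ℝ[P_1, …, P_{n-1}]`. -/
def Tker (C : CoxSetup n hn hyp W) : Set (SS n) :=
  {f | f ∈ Rinv C ∧ Dprim C (toF f) = 0}

/-- `ζ` is `m`-universal : `ζ` is a homogeneous `W`-invariant element of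
`D(𝒜, −∞)` and `Ψ_ζ : Der_S → D(𝒜, 2m)`, `θ ↦ ∇_θ ζ`, is bijective. -/
def isUniversal (C : CoxSetup n hn hyp W) (m : hyp → ℤ) (ζ : DerF n) : Prop :=
  ζ ∈ C.Dinf ∧ invDer C ζ ∧ (∃ dg : ℤ, DerHomog ζ dg) ∧
  Set.BijOn (fun θ => C.nabla θ ζ) {θ | IsPolyDer θ}
    (Dmod C fun H => 2 * m H)

/-- The equivariant odd multiplicity `m*` associated to an arbitrary
multiplicity `m`: `m*(H) = max_{w ∈ W} (2⌊m(wH)/2⌋ + 1)`. -/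
def mstar (C : CoxSetup n hn hyp W) (m : hyp → ℤ) : hyp → ℤ :=
  fun H => Finset.univ.sup' ⟨1, Finset.mem_univ 1⟩
    (fun w : W => 2 * Int.fdiv (m (C.σ w H)) 2 + 1)

/-- A `CoxSetup` whose arrangement decomposes into exactly two `W`-orbits
`𝒜 = 𝒜₁ ∪ 𝒜₂` (`orb H = true` iff `H ∈ 𝒜₁`), with basic invariants
`P^{(i)}_1, …, P^{(i)}_n` of the reflection groups `W_i` of `𝒜_i` (generated by
the reflections through the hyperplanes of `𝒜_i`), the partial derivatives
`∂/∂P^{(i)}_j`, so that `D₁ = ∂/∂P^{(1)}_n` is a primitive derivation for `𝒜₁`,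
assumed to be `W`-invariant; together with the module `D(𝒜₁, −∞)` and the
inverse of the `T₁`-linear automorphism `∇_{D₁}` of `D(𝒜₁, −∞)^{W₁}`. -/
structure CoxSetup2 (n : ℕ) (hn : 0 < n) (hyp W : Type)
    [Fintype hyp] [Group W] [Fintype W] extends CoxSetup n hn hyp W : Type where
  /-- the orbit decomposition `𝒜 = 𝒜₁ ∪ 𝒜₂`: `orb H = true` iff `H ∈ 𝒜₁` -/
  orb : hyp → Bool
  orb_equiv : ∀ (w : W) (H : hyp), orb (σ w H) = orb H
  orb_trans : ∀ H H' : hyp, orb H = orb H' → ∃ w : W, σ w H = H'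
  orb_ne1 : ∃ H, orb H = true
  orb_ne2 : ∃ H, orb H = false
  /-- basic invariants of `W₁`, of degrees `d^{(1)}_1 ≤ … ≤ d^{(1)}_n = h₁` -/
  P1 : Fin n → SS n
  d1 : Fin n → ℕ
  d1_mono : Monotone d1
  d1_pos : ∀ i, 0 < d1 i
  P1_hom : ∀ i, (P1 i).IsHomogeneous (d1 i)
  P1_inv : ∀ (H : hyp), orb H = true → ∀ i, actS (reflW H) (P1 i) = P1 i
  P1_indep : AlgebraicIndependent ℝ P1
  P1_gen : ∀ f : SS n, (∀ H : hyp, orb H = true → actS (reflW H) f = f) →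
      f ∈ Algebra.adjoin ℝ (Set.range P1)
  /-- basic invariants of `W₂`, of degrees `d^{(2)}_1 ≤ … ≤ d^{(2)}_n = h₂` -/
  P2 : Fin n → SS n
  d2 : Fin n → ℕ
  d2_mono : Monotone d2
  d2_pos : ∀ i, 0 < d2 i
  P2_hom : ∀ i, (P2 i).IsHomogeneous (d2 i)
  P2_inv : ∀ (H : hyp), orb H = false → ∀ i, actS (reflW H) (P2 i) = P2 i
  P2_indep : AlgebraicIndependent ℝ P2
  P2_gen : ∀ f : SS n, (∀ H : hyp, orb H = false → actS (reflW H) f = f) →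
      f ∈ Algebra.adjoin ℝ (Set.range P2)
  /-- the partial derivatives `∂/∂P^{(1)}_j`; `D₁ = ∂/∂P^{(1)}_n` is a
  primitive derivation corresponding to the orbit `𝒜₁` -/
  dP1 : Fin n → DerF n
  dP1_eq : ∀ i j, dP1 i (toF (P1 j)) = if i = j then 1 else 0
  /-- the partial derivatives `∂/∂P^{(2)}_j` -/
  dP2 : Fin n → DerF n
  dP2_eq : ∀ i j, dP2 i (toF (P2 j)) = if i = j then 1 else 0
  /-- the primitive derivation `D₁` is `W`-invariant -/
  D1_Winv : ∀ w : W, conjDer (actF w) (dP1 (lastIdx n hn)) = dP1 (lastIdx n hn)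
  /-- the module `D(𝒜₁, −∞)` -/
  Dinf1 : Set (DerF n)
  Eul_mem1 : Eul ∈ Dinf1
  /-- the inverse of the `T₁`-linear automorphism
  `∇_{D₁} : D(𝒜₁, −∞)^{W₁} → D(𝒜₁, −∞)^{W₁}` ([AT09]) -/
  nablaD1inv : DerF n → DerF n
  nablaD1inv_spec : ∀ θ : DerF n, θ ∈ Dinf1 →
      (∀ H : hyp, orb H = true → conjDer (actF (reflW H)) θ = θ) →
      nablaD1inv θ ∈ Dinf1 ∧
      (∀ H : hyp, orb H = true →
        conjDer (actF (reflW H)) (nablaD1inv θ) = nablaD1inv θ) ∧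
      nabla (dP1 (lastIdx n hn)) (nablaD1inv θ) = θ ∧
      nablaD1inv (nabla (dP1 (lastIdx n hn)) θ) = θ

/-- The primitive derivation `D₁` corresponding to the orbit `𝒜₁`. -/
def D1prim (C : CoxSetup2 n hn hyp W) : DerF n := C.dP1 (lastIdx n hn)

/-- The derivation `E^{(p,q)} = ∇_D^{−q} ∇_{D₁}^{q−p} E`. -/
def EulPQ (C : CoxSetup2 n hn hyp W) (p q : ℤ) : DerF n :=
  zpowIter (C.nabla (Dprim C.toCoxSetup)) C.nablaDinv (-q)
    (zpowIter (C.nabla (D1prim C)) C.nablaD1inv (q - p) C.Eul)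

/-- The multiplicity `(m₁, m₂)` taking the constant value `m₁` on `𝒜₁` and
`m₂` on `𝒜₂`. -/
def multTwo (C : CoxSetup2 n hn hyp W) (m1 m2 : ℤ) : hyp → ℤ :=
  fun H => cond (C.orb H) m1 m2

/-- The Coxeter number `h₁` of `W₁`. -/
def cox1 (C : CoxSetup2 n hn hyp W) : ℤ := (C.d1 (lastIdx n hn) : ℤ)

/-- The Coxeter number `h₂` of `W₂`. -/
def cox2 (C : CoxSetup2 n hn hyp W) : ℤ := (C.d2 (lastIdx n hn) : ℤ)

/-- `θ_i^{(p,q)} := ∇_{∂/∂P_i} E^{(p,q)}`. -/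
def thetaPQ (C : CoxSetup2 n hn hyp W) (i : Fin n) (p q : ℤ) : DerF n :=
  C.nabla (C.dP i) (EulPQ C p q)

/-- `𝒢^{(p,q)} = ⊕_{i=1}^n T·θ_i^{(p,q)}`. -/
def GmodPQ (C : CoxSetup2 n hn hyp W) (p q : ℤ) : Set (DerF n) :=
  {θ | ∃ c : Fin n → SS n, (∀ i, c i ∈ Tker C.toCoxSetup) ∧
    θ = ∑ i, toF (c i) • thetaPQ C i p q}


/-- `𝒢^{(k)}`: the `T`-span of `∇_{∂/∂P_1} ∇_D^{−k} ζ, …, ∇_{∂/∂P_n} ∇_D^{−k} ζ`. -/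
def GmodK (C : CoxSetup n hn hyp W) (ζ : DerF n) (k : ℕ) : Set (DerF n) :=
  {θ | ∃ c : Fin n → SS n, (∀ i, c i ∈ Tker C) ∧
    θ = ∑ i, toF (c i) • C.nabla (C.dP i) (C.nablaDinv^[k] ζ)}

/-- The sum `Σ_{k ≥ 0} 𝒢^{(k)} ⊆ Der_F`. -/
def sumGmod (C : CoxSetup n hn hyp W) (ζ : DerF n) : Set (DerF n) :=
  {θ | ∃ (N : ℕ) (g : ℕ → DerF n), (∀ k, g k ∈ GmodK C ζ k) ∧
    θ = ∑ k ∈ Finset.range N, g k}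


/-!
A `W`-invariant derivation `θ` transports the condition at `wH` to the condition at `H`:
applying `w⁻¹` to `θ(α_{wH}) ∈ α_{wH}^{m(wH)} S_{(α_{wH})}` gives
`θ(α_H) ∈ α_H^{m(wH)} S_{(α_H)}` for every `w`. Moreover `θ(α_H)` is anti-invariant under the
reflection `s_H`, which acts trivially on `S/(α_H)` and sends `α_H` to `-α_H`. Hence if
`θ(α_H) = α_H^k s / t` with `k` even and `t ∉ (α_H)`, then
`θ(α_H) (t + s_H t) = α_H^k (s - s_H s)`, where `s - s_H s ∈ (α_H)` and `t + s_H t ≡ 2t ∉ (α_H)`;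
so the order of `θ(α_H)` along `H` is odd or at least `k + 1`, i.e. at least `2⌊k/2⌋ + 1`.
The reverse inclusion is the monotonicity of `D(𝒜, m)` in `m`, as `m ≤ m*`.
-/

lemma toF_smul (c : ℝ) (p : SS n) : toF (c • p) = c • toF p := by
  rw [toF, Algebra.smul_def, map_mul, ← IsScalarTower.algebraMap_apply, ← Algebra.smul_def, toF]

lemma toF_ne_zero {p : SS n} (hp : p ≠ 0) : toF p ≠ 0 := fun h =>
  hp (IsFractionRing.injective (SS n) (FF n) (h.trans (map_zero _).symm))

lemma ip1_sub_smul_left (p q r : SS n) (c : ℝ) :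
    ip1 (p - c • q) r = ip1 p r - c * ip1 q r := by
  simp only [ip1, coeff_sub, coeff_smul, smul_eq_mul, sub_mul, Finset.sum_sub_distrib,
    Finset.mul_sum, mul_assoc]

lemma ip1_self_pos {α : SS n} (h1 : α.IsHomogeneous 1) (h0 : α ≠ 0) : 0 < ip1 α α := by
  obtain ⟨d, hd⟩ := exists_coeff_ne_zero h0
  obtain ⟨j, rfl⟩ : d ∈ Set.range fun j : Fin n => Finsupp.single j 1 := by
    rw [Finsupp.range_single_one]
    by_contra hdeg
    exact hd (h1.coeff_eq_zero hdeg)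
  exact Finset.sum_pos' (fun i _ => mul_self_nonneg _) ⟨j, Finset.mem_univ j, mul_self_pos.mpr hd⟩

lemma MvPolynomial.algHom_apply_sub_mem {σ R : Type*} [CommRing R]
    (φ : MvPolynomial σ R →ₐ[R] MvPolynomial σ R) {I : Ideal (MvPolynomial σ R)}
    (hX : ∀ i, φ (X i) - X i ∈ I) (g : MvPolynomial σ R) : φ g - g ∈ I := by
  have hmod : (Ideal.Quotient.mkₐ R I).comp φ = Ideal.Quotient.mkₐ R I :=
    algHom_ext fun i => by simpa [Ideal.Quotient.eq] using hX i
  simpa [Ideal.Quotient.eq] using AlgHom.congr_fun hmod g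

namespace MemLoc

variable {α : SS n} {k : ℤ} {f : FF n}

lemma mono (hα : α ≠ 0) {k' : ℤ} (hk : k' ≤ k) (h : MemLoc α k f) : MemLoc α k' f := by
  obtain ⟨s, t, ht, heq⟩ := h
  obtain ⟨d, rfl⟩ : ∃ d : ℕ, k = k' + d := ⟨(k - k').toNat, by omega⟩
  refine ⟨α ^ d * s, t, ht, ?_⟩
  rw [heq, zpow_add₀ (toF_ne_zero hα), zpow_natCast]
  simp only [toF, map_mul, map_pow, mul_assoc]

lemma map (r : SS n ≃ₐ[ℝ] SS n) (e : FF n ≃ₐ[ℝ] FF n) (hre : ∀ p, e (toF p) = toF (r p))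
    (h : MemLoc α k f) : MemLoc (r α) k (e f) := by
  obtain ⟨s, t, ht, heq⟩ := h
  refine ⟨r s, r t, fun hrt => ht ?_, ?_⟩
  · rw [Ideal.mem_span_singleton] at hrt ⊢
    simpa using map_dvd r.symm hrt
  · simpa [hre] using congrArg e heq

lemma of_smul {c : ℝ} (hc : c ≠ 0) (h : MemLoc (c • α) k (c • f)) : MemLoc α k f := by
  obtain ⟨s, t, ht, heq⟩ := h
  refine ⟨c ^ (k - 1) • s, t, fun hαt => ht ?_, ?_⟩
  · obtain ⟨g, rfl⟩ := Ideal.mem_span_singleton.mp hαt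
    refine Ideal.mem_span_singleton.mpr ⟨c⁻¹ • g, ?_⟩
    rw [smul_mul_smul_comm, mul_inv_cancel₀ hc, one_smul]
  · have ha : algebraMap ℝ (FF n) c ≠ 0 := by simpa using hc
    rw [toF_smul, Algebra.smul_def, Algebra.smul_def, mul_zpow, mul_assoc] at heq
    rw [toF_smul, Algebra.smul_def, map_zpow₀, zpow_sub_one₀ ha]
    have := congrArg (fun x => (algebraMap ℝ (FF n) c)⁻¹ * x) heq
    simp only [← mul_assoc, inv_mul_cancel₀ ha, one_mul] at this
    rw [this]
    ring

lemma add_one_of_even (hα : α ≠ 0) (r : SS n ≃ₐ[ℝ] SS n) (e : FF n ≃ₐ[ℝ] FF n)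
    (hre : ∀ p, e (toF p) = toF (r p))
    (hr : ∀ g, r g - g ∈ Ideal.span ({α} : Set (SS n))) (hrα : r α = -α) (hf : e f = -f)
    (hk : Even k) (h : MemLoc α k f) : MemLoc α (k + 1) f := by
  obtain ⟨s, t, ht, heq⟩ := h
  have hreflect : f * toF (r t) = toF α ^ k * toF (-r s) := by
    have := congrArg e heq
    rw [map_mul, map_mul, hf, map_zpow₀, hre, hre, hre, hrα] at this
    simp only [toF, map_neg, hk.neg_zpow, neg_mul] at this ⊢
    rw [mul_neg, ← this, neg_neg]
  obtain ⟨g, hg⟩ : α ∣ s - r s := by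
    rw [← neg_sub]; exact dvd_neg.mpr (Ideal.mem_span_singleton.mp (hr s))
  have hsum : f * toF (t + r t) = toF α ^ (k + 1) * toF g := calc
    f * toF (t + r t) = f * toF t + f * toF (r t) := by simp only [toF, map_add, mul_add]
    _ = toF α ^ k * toF (s - r s) := by
      rw [heq, hreflect, ← mul_add]; simp only [toF, map_neg, map_add, sub_eq_add_neg]
    _ = toF α ^ (k + 1) * toF g := by
      rw [hg, zpow_add_one₀ (toF_ne_zero hα)]; simp only [toF, map_mul]; ring
  refine ⟨g, t + r t, fun hmem => ht ?_, hsum⟩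
  have h2 : IsUnit (2 : SS n) := by
    have := (isUnit_iff_ne_zero.mpr (two_ne_zero (α := ℝ))).map (algebraMap ℝ (SS n))
    rwa [map_ofNat] at this
  rw [← Ideal.unit_mul_mem_iff_mem _ h2, two_mul]
  convert Ideal.sub_mem _ hmem (hr t) using 1
  ring

end MemLoc

namespace CoxSetup

variable (C : CoxSetup n hn hyp W)

lemma reflW_apply_sub_mem_of_isHomogeneous (H : hyp) {p : SS n} (hp : p.IsHomogeneous 1) :
    C.actS (C.reflW H) p - p ∈ Ideal.span {C.α H} := by
  set c := ip1 p (C.α H) / ip1 (C.α H) (C.α H)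
  have hfix : C.actS (C.reflW H) (p - c • C.α H) = p - c • C.α H := by
    refine C.reflW_fix H _ (hp.sub ?_) ?_
    · rw [smul_eq_C_mul]; exact (C.α_hom H).C_mul c
    · rw [ip1_sub_smul_left, div_mul_cancel₀ _ (ip1_self_pos (C.α_hom H) (C.α_ne H)).ne',
        sub_self]
  rw [map_sub, map_smul, C.reflW_α] at hfix
  have : C.actS (C.reflW H) p - p = C.α H * MvPolynomial.C (-2 * c) := by
    rw [mul_comm, ← smul_eq_C_mul]
    linear_combination (norm := module) hfix
  rw [this]
  exact Ideal.mul_mem_right _ _ (Ideal.mem_span_singleton_self _)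

lemma reflW_apply_sub_mem (H : hyp) (g : SS n) :
    C.actS (C.reflW H) g - g ∈ Ideal.span {C.α H} :=
  MvPolynomial.algHom_apply_sub_mem (C.actS (C.reflW H) : SS n →ₐ[ℝ] SS n)
    (fun i => C.reflW_apply_sub_mem_of_isHomogeneous H (isHomogeneous_X ℝ i)) g

end CoxSetup

namespace invDer

variable {C : CoxSetup n hn hyp W} {θ : DerF n}

lemma apply_actF (hθ : invDer C θ) (w : W) (f : FF n) : θ (C.actF w f) = C.actF w (θ f) := by
  have h : C.actF w (θ ((C.actF w).symm (C.actF w f))) = θ (C.actF w f) :=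
    DFunLike.congr_fun (hθ w) _
  rw [AlgEquiv.symm_apply_apply] at h
  exact h.symm

lemma actF_reflW_apply_α (hθ : invDer C θ) (H : hyp) :
    C.actF (C.reflW H) (θ (toF (C.α H))) = -θ (toF (C.α H)) := by
  rw [← hθ.apply_actF, C.actF_compat, C.reflW_α, toF, map_neg, map_neg, toF]

lemma memLoc_of_memLoc_σ (hθ : invDer C θ) (H : hyp) (w : W) {k : ℤ}
    (h : MemLoc (C.α (C.σ w H)) k (θ (toF (C.α (C.σ w H))))) :
    MemLoc (C.α H) k (θ (toF (C.α H))) := by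
  obtain ⟨c, hc, hcα⟩ := C.σ_compat w⁻¹ (C.σ w H)
  rw [← Equiv.Perm.mul_apply, ← map_mul, inv_mul_cancel, map_one, Equiv.Perm.one_apply] at hcα
  refine MemLoc.of_smul hc ?_
  have := h.map (C.actS w⁻¹) (C.actF w⁻¹) (C.actF_compat w⁻¹)
  rwa [← hθ.apply_actF, C.actF_compat, hcα, toF_smul, θ.map_smul] at this

lemma memLoc_two_mul_fdiv_two_add_one (hθ : invDer C θ) (H : hyp) {k : ℤ}
    (h : MemLoc (C.α H) k (θ (toF (C.α H)))) :
    MemLoc (C.α H) (2 * k.fdiv 2 + 1) (θ (toF (C.α H))) := by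
  rw [Int.fdiv_eq_ediv_of_nonneg _ zero_le_two]
  rcases Int.even_or_odd k with hk | hk
  · rw [show 2 * (k / 2) + 1 = k + 1 by rw [Int.even_iff] at hk; omega]
    exact h.add_one_of_even (C.α_ne H) _ _ (C.actF_compat _) (C.reflW_apply_sub_mem H)
      (C.reflW_α H) (hθ.actF_reflW_apply_α H) hk
  · rwa [show 2 * (k / 2) + 1 = k by rw [Int.odd_iff] at hk; omega]

end invDer

lemma le_mstar (C : CoxSetup n hn hyp W) (m : hyp → ℤ) (H : hyp) : m H ≤ mstar C m H :=
  calc m H ≤ 2 * (m (C.σ 1 H)).fdiv 2 + 1 := by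
        rw [map_one, Equiv.Perm.one_apply, Int.fdiv_eq_ediv_of_nonneg _ zero_le_two]; omega
    _ ≤ mstar C m H := Finset.le_sup' (fun w : W => 2 * (m (C.σ w H)).fdiv 2 + 1)
        (Finset.mem_univ 1)

lemma exists_mstar_eq (C : CoxSetup n hn hyp W) (m : hyp → ℤ) (H : hyp) :
    ∃ w : W, mstar C m H = 2 * (m (C.σ w H)).fdiv 2 + 1 := by
  obtain ⟨w, -, hw⟩ := Finset.exists_mem_eq_sup' ⟨1, Finset.mem_univ 1⟩
    (fun w : W => 2 * (m (C.σ w H)).fdiv 2 + 1)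
  exact ⟨w, hw⟩

theorem stmt16 (C : CoxSetup n hn hyp W) (m : hyp → ℤ) :
    DmodW C m = DmodW C (mstar C m) := by
  ext θ
  constructor
  · rintro ⟨⟨hinf, hloc⟩, hθ⟩
    refine ⟨⟨hinf, fun H => ?_⟩, hθ⟩
    obtain ⟨w, hw⟩ := exists_mstar_eq C m H
    rw [hw]
    exact hθ.memLoc_two_mul_fdiv_two_add_one H (hθ.memLoc_of_memLoc_σ H w (hloc (C.σ w H)))
  · rintro ⟨⟨hinf, hloc⟩, hθ⟩
    exact ⟨⟨hinf, fun H => (hloc H).mono (C.α_ne H) (le_mstar C m H)⟩, hθ⟩
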